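/- Let G and H be connected graphs, with |V(G)|≥2. Then F(G+_Q H) = |V(H)|F(G) + |V(G)|F(H) + 6|E(H)|M₁(G) + 6|E(G)|M₁(H) + |V(H)|ξ₄(G) + 3|V(H)|ReZG(G), where G+_Q H is the Q-sum. -/

import Mathlib

open SimpleGraph Finset
open scoped Classical

noncomputable section

/-- The generalized hierarchical product `G(U)ΠH`. -/
def hierProd {α β : Type*} (G : SimpleGraph α) (H : SimpleGraph β) (U : Set α) :
    SimpleGraph (α × β) where
  Adj p q := (p.1 = q.1 ∧ p.1 ∈ U ∧ H.Adj p.2 q.2) ∨ (p.2 = q.2 ∧ G.Adj p.1 q.1)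
  symm := by
    constructor
    rintro p q (⟨h1, h2, h3⟩ | ⟨h1, h2⟩)
    · exact Or.inl ⟨h1.symm, h1 ▸ h2, h3.symm⟩
    · exact Or.inr ⟨h1.symm, h2.symm⟩
  loopless := by
    constructor
    rintro p (⟨_, _, h⟩ | ⟨_, h⟩)
    · exact H.loopless.irrefl _ h
    · exact G.loopless.irrefl _ h

/-- The F-index (forgotten topological index): sum of cubes of degrees. -/
def Findex {α : Type*} [Fintype α] (G : SimpleGraph α) : ℕ :=
  ∑ v, G.degree v ^ 3

/-- The first Zagreb index: sum of squares of degrees. -/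
def M1 {α : Type*} [Fintype α] (G : SimpleGraph α) : ℕ :=
  ∑ v, G.degree v ^ 2

/-- The general first Zagreb index with exponent `n`. -/
def xiIndex {α : Type*} [Fintype α] (G : SimpleGraph α) (n : ℕ) : ℕ :=
  ∑ v, G.degree v ^ n

/-- The redefined Zagreb index `ReZG(G) = Σ_{uv∈E} d(u)d(v)(d(u)+d(v))`. -/
def ReZG {α : Type*} [Fintype α] (G : SimpleGraph α) : ℕ :=
  ∑ e ∈ G.edgeFinset,
    Sym2.lift ⟨fun u v => G.degree u * G.degree v * (G.degree u + G.degree v),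
      fun u v => by ring⟩ e

/-- The subdivision graph `S(G)`: each edge replaced by a path of length two. -/
def Sgraph {α : Type*} (G : SimpleGraph α) : SimpleGraph (α ⊕ ↥G.edgeSet) where
  Adj x y :=
    match x, y with
    | Sum.inl u, Sum.inr e => u ∈ (e : Sym2 α)
    | Sum.inr e, Sum.inl u => u ∈ (e : Sym2 α)
    | _, _ => False
  symm := by constructor; rintro (u | e) (v | f) h <;> simp_all
  loopless := by constructor; rintro (u | e) h <;> simp_all

/-- The graph on `V(G) ⊕ E(G)` whose only edges are the original edges of `G`. -/
def Ograph {α : Type*} (G : SimpleGraph α) : SimpleGraph (α ⊕ ↥G.edgeSet) where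
  Adj x y :=
    match x, y with
    | Sum.inl u, Sum.inl v => G.Adj u v
    | _, _ => False
  symm := by constructor; rintro (u | e) (v | f) h <;> simp_all <;> exact h.symm
  loopless := by constructor; rintro (u | e) h <;> simp_all

/-- The graph on `V(G) ⊕ E(G)` whose edges join pairs of adjacent edges of `G`
(line-graph adjacency). -/
def Lgraph {α : Type*} (G : SimpleGraph α) : SimpleGraph (α ⊕ ↥G.edgeSet) where
  Adj x y :=
    match x, y with
    | Sum.inr e, Sum.inr f => e ≠ f ∧ ∃ u, u ∈ (e : Sym2 α) ∧ u ∈ (f : Sym2 α)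
    | _, _ => False
  symm := by
    constructor
    rintro (u | e) (v | f) h <;> simp_all
    exact ⟨Ne.symm h.1, h.2.imp fun u hu => hu.symm⟩
  loopless := by constructor; rintro (u | e) h <;> simp_all

/-- The triangle parallel graph `R(G)`. -/
def Rgraph {α : Type*} (G : SimpleGraph α) : SimpleGraph (α ⊕ ↥G.edgeSet) :=
  Sgraph G ⊔ Ograph G

/-- The line superposition graph `Q(G)`. -/
def Qgraph {α : Type*} (G : SimpleGraph α) : SimpleGraph (α ⊕ ↥G.edgeSet) :=
  Sgraph G ⊔ Lgraph G

/-- The total graph `T(G)`. -/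
def Tgraph {α : Type*} (G : SimpleGraph α) : SimpleGraph (α ⊕ ↥G.edgeSet) :=
  Sgraph G ⊔ Ograph G ⊔ Lgraph G

/-- The F-sum `G +_F H`, where `K` is one of `S(G), R(G), Q(G), T(G)`:
the generalized hierarchical product `K(V(G))ΠH`. -/
def FSum {α β : Type*} {G : SimpleGraph α} (K : SimpleGraph (α ⊕ ↥G.edgeSet))
    (H : SimpleGraph β) : SimpleGraph ((α ⊕ ↥G.edgeSet) × β) :=
  hierProd K H (Set.range Sum.inl)

end


/-! In `G +_Q H` a vertex `(u, b)` with `u ∈ V(G)` has degree `d_G(u) + d_H(b)`, and a vertex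
`(e, b)` with `e = uv ∈ E(G)` has degree `d_G(u) + d_G(v)`: its two endpoints plus the
`d_G(u) + d_G(v) - 2` other edges meeting `e`. Cubing and summing, the first kind of vertex
contributes the terms in `F`, `M₁` and (by the handshake lemma `Σ d = 2|E|`) `|E|`, while
`Σ_{uv ∈ E} (d(u) + d(v))³ = ξ₄(G) + 3 ReZG(G)` accounts for the second kind. -/

lemma sum_sum_add_pow_three {ι κ R : Type*} [Fintype ι] [Fintype κ] [CommSemiring R]
    (f : ι → R) (g : κ → R) :
    ∑ i, ∑ j, (f i + g j) ^ 3 =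
      Fintype.card κ * ∑ i, f i ^ 3 + Fintype.card ι * ∑ j, g j ^ 3
        + 3 * (∑ i, f i ^ 2) * ∑ j, g j + 3 * (∑ i, f i) * ∑ j, g j ^ 2 := by
  have hcube : ∀ a b : R, (a + b) ^ 3 = a ^ 3 + b ^ 3 + 3 * a ^ 2 * b + 3 * a * b ^ 2 :=
    fun a b => by ring
  simp only [hcube, sum_add_distrib, sum_const, card_univ, nsmul_eq_mul, ← mul_sum, ← sum_mul]

namespace SimpleGraph

lemma degree_eq_card_adj_inl_add_card_adj_inr {γ δ : Type*} [Fintype γ] [Fintype δ]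
    (K : SimpleGraph (γ ⊕ δ)) (x : γ ⊕ δ) :
    K.degree x = #{a | K.Adj x (.inl a)} + #{d | K.Adj x (.inr d)} := by
  rw [← card_neighborFinset_eq_degree, neighborFinset_eq_filter, card_filter, card_filter,
    card_filter, Fintype.sum_sum_type]

variable {α : Type*} [Fintype α] (G : SimpleGraph α)

lemma card_filter_edgeSet (P : Sym2 α → Prop) [DecidablePred P] :
    #{e : G.edgeSet | P e} = #{e ∈ G.edgeFinset | P e} := by
  refine card_bij (fun e _ => e.1) ?_ (fun e _ f _ => Subtype.ext) ?_
  · simp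
  · simp only [mem_filter, mem_edgeFinset, mem_univ, true_and]
    exact fun e ⟨he, hP⟩ => ⟨⟨e, he⟩, hP, rfl⟩

lemma card_incidenceFinset_union_add_one {u v : α} (h : G.Adj u v) :
    #(G.incidenceFinset u ∪ G.incidenceFinset v) + 1 = G.degree u + G.degree v := by
  have hinter : G.incidenceFinset u ∩ G.incidenceFinset v = {s(u, v)} := by
    simpa [← coe_inj, ← coe_incidenceFinset] using G.incidenceSet_inter_incidenceSet_of_adj h
  rw [← card_singleton s(u, v), ← hinter, card_union_add_card_inter,
    card_incidenceFinset_eq_degree, card_incidenceFinset_eq_degree]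

lemma sum_edgeFinset_lift_add {M : Type*} [AddCommMonoid M] (f : α → M) :
    ∑ e ∈ G.edgeFinset, Sym2.lift ⟨fun u v => f u + f v, fun _ _ => add_comm _ _⟩ e
      = ∑ v, G.degree v • f v := by
  have hends : ∀ e ∈ G.edgeFinset,
      Sym2.lift ⟨fun u v => f u + f v, fun _ _ => add_comm _ _⟩ e = ∑ w ∈ {w | w ∈ e}, f w := by
    intro e he
    induction e using Sym2.inductionOn with | hf u v =>
    rw [show ({w | w ∈ s(u, v)} : Finset α) = {u, v} by ext; simp,
      sum_pair (G.mem_edgeFinset.1 he).ne, Sym2.lift_mk]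
  simp_rw [sum_congr rfl hends, sum_filter]
  rw [sum_comm]
  refine sum_congr rfl fun w _ => ?_
  rw [← sum_filter, sum_const, ← incidenceFinset_eq_filter, card_incidenceFinset_eq_degree]

lemma sum_edgeFinset_lift_add_degree_pow_three :
    ∑ e ∈ G.edgeFinset,
        Sym2.lift ⟨fun u v => G.degree u + G.degree v, fun _ _ => add_comm _ _⟩ e ^ 3
      = xiIndex G 4 + 3 * ReZG G := by
  have hcube : ∀ e : Sym2 α,
      Sym2.lift ⟨fun u v => G.degree u + G.degree v, fun _ _ => add_comm _ _⟩ e ^ 3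
        = Sym2.lift ⟨fun u v => G.degree u ^ 3 + G.degree v ^ 3, fun _ _ => add_comm _ _⟩ e
          + 3 * Sym2.lift ⟨fun u v => G.degree u * G.degree v * (G.degree u + G.degree v),
              fun u v => by ring⟩ e := by
    intro e
    induction e using Sym2.inductionOn with | hf u v => simp only [Sym2.lift_mk]; ring
  rw [sum_congr rfl fun e _ => hcube e, sum_add_distrib, ← mul_sum,
    sum_edgeFinset_lift_add G (fun v => G.degree v ^ 3), ReZG, xiIndex]
  simp only [smul_eq_mul, ← pow_succ']

end SimpleGraph

section HierProd
variable {γ β : Type*} (K : SimpleGraph γ) (H : SimpleGraph β) (U : Set γ)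

lemma hierProd_adj (p q : γ × β) :
    (hierProd K H U).Adj p q ↔ p.1 = q.1 ∧ p.1 ∈ U ∧ H.Adj p.2 q.2 ∨ p.2 = q.2 ∧ K.Adj p.1 q.1 :=
  Iff.rfl

lemma neighborFinset_hierProd [Fintype γ] [Fintype β] (a : γ) (b : β) :
    (hierProd K H U).neighborFinset (a, b) =
      K.neighborFinset a ×ˢ {b} ∪ {a} ×ˢ (if a ∈ U then H.neighborFinset b else ∅) := by
  ext ⟨x, y⟩
  by_cases hU : a ∈ U <;>
    simp only [hierProd_adj, hU, mem_neighborFinset, mem_union, mem_product, mem_singleton,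
      if_true, if_false, notMem_empty] <;> grind

lemma degree_hierProd [Fintype γ] [Fintype β] (a : γ) (b : β) :
    (hierProd K H U).degree (a, b) = K.degree a + if a ∈ U then H.degree b else 0 := by
  have hdisj : Disjoint (K.neighborFinset a ×ˢ {b})
      ({a} ×ˢ (if a ∈ U then H.neighborFinset b else ∅)) := by
    simp only [Finset.disjoint_left, mem_product, mem_singleton, mem_neighborFinset]
    rintro ⟨x, y⟩ ⟨hax, -⟩ ⟨rfl, -⟩
    exact K.loopless.irrefl x hax
  rw [← card_neighborFinset_eq_degree, neighborFinset_hierProd, card_union_of_disjoint hdisj,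
    card_product, card_product]
  split_ifs <;> simp

end HierProd

section Qgraph
variable {α : Type*} (G : SimpleGraph α)

@[simp] lemma qgraph_adj_inl_inl (u v : α) : ¬(Qgraph G).Adj (.inl u) (.inl v) := by
  simp [Qgraph, Sgraph, Lgraph]

@[simp] lemma qgraph_adj_inl_inr (u : α) (e : G.edgeSet) :
    (Qgraph G).Adj (.inl u) (.inr e) ↔ u ∈ (e : Sym2 α) := by
  simp [Qgraph, Sgraph, Lgraph]

@[simp] lemma qgraph_adj_inr_inl (e : G.edgeSet) (u : α) :
    (Qgraph G).Adj (.inr e) (.inl u) ↔ u ∈ (e : Sym2 α) := by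
  simp [Qgraph, Sgraph, Lgraph]

@[simp] lemma qgraph_adj_inr_inr (e f : G.edgeSet) :
    (Qgraph G).Adj (.inr e) (.inr f) ↔ G.lineGraph.Adj e f := by
  simp [Qgraph, Sgraph, Lgraph, lineGraph_adj_iff_exists]

variable [Fintype α]

lemma degree_qgraph_inl (u : α) : (Qgraph G).degree (.inl u) = G.degree u := by
  rw [degree_eq_card_adj_inl_add_card_adj_inr]
  simp only [qgraph_adj_inl_inl, qgraph_adj_inl_inr, filter_false, card_empty, zero_add,
    card_filter_edgeSet G (u ∈ ·), ← incidenceFinset_eq_filter, card_incidenceFinset_eq_degree]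

lemma degree_qgraph_inr (e : G.edgeSet) :
    (Qgraph G).degree (.inr e) =
      Sym2.lift ⟨fun u v => G.degree u + G.degree v, fun _ _ => add_comm _ _⟩ (e : Sym2 α) := by
  obtain ⟨e, he⟩ := e
  induction e using Sym2.inductionOn with | hf u v =>
  have h : G.Adj u v := he
  have hends : #{a | a ∈ s(u, v)} = 2 := by
    rw [show ({a | a ∈ s(u, v)} : Finset α) = {u, v} by ext; simp, card_pair h.ne]
  have hlines : #{f : G.edgeSet | G.lineGraph.Adj ⟨s(u, v), he⟩ f} + 1
      = #(G.incidenceFinset u ∪ G.incidenceFinset v) := by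
    simp only [lineGraph_adj_iff_exists, ne_eq, Subtype.ext_iff]
    rw [card_filter_edgeSet G (fun f => ¬s(u, v) = f ∧ ∃ w, w ∈ s(u, v) ∧ w ∈ f)]
    have hmem : s(u, v) ∈ G.incidenceFinset u ∪ G.incidenceFinset v := by simp [h]
    rw [← card_erase_add_one hmem]
    congr 2
    ext f
    simp only [mem_filter, mem_edgeFinset, mem_erase, mem_union, mem_incidenceFinset,
      incidenceSet, Set.mem_sep_iff]
    grind
  rw [degree_eq_card_adj_inl_add_card_adj_inr]
  simp only [qgraph_adj_inr_inl, qgraph_adj_inr_inr, hends]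
  have := G.card_incidenceFinset_union_add_one h
  simp only [Sym2.lift_mk]
  omega

end Qgraph

section QSum
variable {α β : Type*} [Fintype α] [Fintype β] (G : SimpleGraph α) (H : SimpleGraph β)

lemma degree_fSum_qgraph_inl (a : α) (b : β) :
    (FSum (Qgraph G) H).degree (.inl a, b) = G.degree a + H.degree b := by
  rw [FSum, degree_hierProd, if_pos (Set.mem_range_self a), degree_qgraph_inl]

lemma degree_fSum_qgraph_inr (e : G.edgeSet) (b : β) :
    (FSum (Qgraph G) H).degree (.inr e, b) =
      Sym2.lift ⟨fun u v => G.degree u + G.degree v, fun _ _ => add_comm _ _⟩ (e : Sym2 α) := by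
  rw [FSum, degree_hierProd, if_neg (by simp), degree_qgraph_inr, add_zero]

end QSum

theorem Findex_Qsum_general {α β : Type*} [Fintype α] [Fintype β]
    (G : SimpleGraph α) (H : SimpleGraph β) :
    Findex (FSum (Qgraph G) H) =
      Fintype.card β * Findex G + Fintype.card α * Findex H
        + 6 * H.edgeFinset.card * M1 G + 6 * G.edgeFinset.card * M1 H
        + Fintype.card β * xiIndex G 4 + 3 * Fintype.card β * ReZG G := by
  have hedges := G.sum_edgeFinset_lift_add_degree_pow_three
  rw [edgeFinset, ← sum_set_coe] at hedges
  rw [Findex, Fintype.sum_prod_type, Fintype.sum_sum_type]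
  simp only [degree_fSum_qgraph_inl, degree_fSum_qgraph_inr, sum_const, card_univ, smul_eq_mul]
  rw [sum_sum_add_pow_three, ← mul_sum, hedges, G.sum_degrees_eq_twice_card_edges,
    H.sum_degrees_eq_twice_card_edges, Nat.cast_id, Nat.cast_id, ← Findex, ← Findex, ← M1, ← M1]
  ring

theorem Findex_Qsum {α β : Type*} [Fintype α] [Fintype β]
    (G : SimpleGraph α) (H : SimpleGraph β)
    (hcard : 2 ≤ Fintype.card α) (hG : G.Connected) (hH : H.Connected) :
    Findex (FSum (Qgraph G) H) =
      Fintype.card β * Findex G + Fintype.card α * Findex H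
        + 6 * H.edgeFinset.card * M1 G + 6 * G.edgeFinset.card * M1 H
        + Fintype.card β * xiIndex G 4 + 3 * Fintype.card β * ReZG G :=
  Findex_Qsum_general G H
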